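/- arXiv:2006.15225 — 6 statements merged into one kernel-verified Lean document; each statement's English description precedes it below -/
import Mathlib

section
/- For all integers n ≥ 3 and 2 ≤ K ≤ n, the ratio-cut polytope RCut^K_n is full-dimensional in ℝ^{n(n−1)/2}: its affine hull is all of ℝ^{n(n−1)/2}, i.e., dim(RCut^K_n) = n(n−1)/2. -/
/-- Index set for the pairs `1 ≤ i < j ≤ n`. -/
abbrev PairIdx (n : ℕ) := {p : Fin n × Fin n // p.1 < p.2}

/-- The space `ℝ^{n(n-1)/2}` of vectors indexed by pairs `i < j`. -/
abbrev CutSpace (n : ℕ) := PairIdx n → ℝ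

/-- The ratio-cut vector of the partition of `[n]` induced by the cluster
assignment `c : Fin n → Fin K` (such assignments describe exactly the partitions
of `[n]` into at most `K` nonempty clusters): the entry at a pair `i < j` is
`1/|Γ|` if `i, j` lie in the same cluster `Γ` and `0` otherwise. -/
noncomputable def cutVec (n K : ℕ) (c : Fin n → Fin K) : CutSpace n := fun p =>
  if c p.1.1 = c p.1.2 then
    (1 : ℝ) / ((Finset.univ.filter fun i => c i = c p.1.1).card : ℝ)
  else 0

/-- The ratio-cut polytope `RCut^K_n`: convex hull of the ratio-cut vectors of all
partitions of `[n]` into at most `K` nonempty clusters. -/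
def RCut (n K : ℕ) : Set (CutSpace n) :=
  convexHull ℝ {X | ∃ c : Fin n → Fin K, X = cutVec n K c}

/-- `RCut^{=K}_n`: convex hull of the ratio-cut vectors of all partitions of `[n]`
into exactly `K` nonempty clusters (i.e. surjective cluster assignments). -/
def RCutEq (n K : ℕ) : Set (CutSpace n) :=
  convexHull ℝ {X | ∃ c : Fin n → Fin K, Function.Surjective c ∧ X = cutVec n K c}

/-- Symmetric entry access: `ent X i j = X_{ij}` for `i ≠ j`, with `X_{ji} = X_{ij}`. -/
noncomputable def ent {n : ℕ} (X : CutSpace n) (i j : Fin n) : ℝ :=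
  if h : i < j then X ⟨(i, j), h⟩ else if h' : j < i then X ⟨(j, i), h'⟩ else 0

/-- `∑_{i,j ∈ T, i < j} X_{ij}`. -/
noncomputable def pairSumOn {n : ℕ} (X : CutSpace n) (T : Finset (Fin n)) : ℝ :=
  ∑ p : PairIdx n, if p.1.1 ∈ T ∧ p.1.2 ∈ T then X p else 0

/-- The polyhedral relaxation `RMet^K_n` of the ratio-cut polytope, cut out by the
facet-defining inequalities of Propositions 2-4 of the paper. -/
def RMet (n K : ℕ) : Set (CutSpace n) :=
  {X | ((n : ℝ) - K) / 2 ≤ ∑ p : PairIdx n, X p ∧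
    (∀ l : Fin n, ∀ T : Finset (Fin n), l ∉ T → 2 ≤ T.card → T.card ≤ K →
      2 * ∑ j ∈ T, ent X l j + ∑ j ∈ Finset.univ \ insert l T, ent X l j
        ≤ 1 + pairSumOn X T) ∧
    ∀ p : PairIdx n, 0 ≤ X p}

/-- The polyhedral relaxation `RMet^{=K}_n`: same constraints as `RMet^K_n` with the
first inequality replaced by an equality. -/
def RMetEq (n K : ℕ) : Set (CutSpace n) :=
  {X | (∑ p : PairIdx n, X p = ((n : ℝ) - K) / 2) ∧
    (∀ l : Fin n, ∀ T : Finset (Fin n), l ∉ T → 2 ≤ T.card → T.card ≤ K →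
      2 * ∑ j ∈ T, ent X l j + ∑ j ∈ Finset.univ \ insert l T, ent X l j
        ≤ 1 + pairSumOn X T) ∧
    ∀ p : PairIdx n, 0 ≤ X p}

/-!
Two-cluster partitions already suffice. Writing `v_S` for the ratio-cut vector of the partition
`{S, Sᶜ}`, the four vectors `v_∅, v_{i}, v_{j}, v_{i,j}` combine with coefficients of total
weight zero to a nonzero multiple of the unit vector `e_{ij}`, so every unit vector lies in the
direction of the affine hull of the vertices.
-/

namespace RatioCut

variable {n K : ℕ}

def splitAssign (hK : 2 ≤ K) (S : Finset (Fin n)) : Fin n → Fin K :=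
  fun i => Fin.castLE hK (if i ∈ S then 0 else 1)

lemma splitAssign_eq_iff (hK : 2 ≤ K) (S : Finset (Fin n)) (a b : Fin n) :
    splitAssign hK S a = splitAssign hK S b ↔ (a ∈ S ↔ b ∈ S) := by
  rw [splitAssign, splitAssign, (Fin.castLE_injective hK).eq_iff]
  split_ifs <;> simp_all

lemma cutVec_splitAssign_apply (hK : 2 ≤ K) (S : Finset (Fin n)) (p : PairIdx n) :
    cutVec n K (splitAssign hK S) p =
      if p.1.1 ∈ S then (if p.1.2 ∈ S then (S.card : ℝ)⁻¹ else 0)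
      else (if p.1.2 ∈ S then 0 else (Sᶜ.card : ℝ)⁻¹) := by
  obtain ⟨⟨u, v⟩, huv⟩ := p
  by_cases hu : u ∈ S <;> by_cases hv : v ∈ S <;>
    simp [cutVec, splitAssign_eq_iff, hu, hv, Finset.compl_eq_univ_sdiff,
      Finset.filter_notMem_eq_sdiff]

lemma cast_card_compl (S : Finset (Fin n)) : (Sᶜ.card : ℝ) = n - S.card := by
  rw [Finset.card_compl, Fintype.card_fin,
    Nat.cast_sub ((Finset.card_le_univ S).trans_eq (Fintype.card_fin n))]

/- With `J` the all-ones vector and `N_k` the indicator of the pairs containing `k`: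
`v_∅ = J/n`, `v_{i} = (J - N_i)/(n-1)`, `v_{j} = (J - N_j)/(n-1)` and
`v_{i,j} = (1/2 + 1/(n-2)) e_{ij} + (J - N_i - N_j)/(n-2)`. -/
lemma smul_single_eq_split_combination (hn : 3 ≤ n) (hK : 2 ≤ K) {i j : Fin n} (hij : i < j) :
    ((n : ℝ) / 2) • Pi.single (⟨(i, j), hij⟩ : PairIdx n) (1 : ℝ) =
      ((n : ℝ) - 2) • (cutVec n K (splitAssign hK {i, j}) - cutVec n K (splitAssign hK ∅))
      - ((n : ℝ) - 1) • (cutVec n K (splitAssign hK {i}) - cutVec n K (splitAssign hK ∅))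
      - ((n : ℝ) - 1) • (cutVec n K (splitAssign hK {j}) - cutVec n K (splitAssign hK ∅)) := by
  have hn' : (3 : ℝ) ≤ n := by exact_mod_cast hn
  have hn1 : (n : ℝ) - 1 ≠ 0 := by linarith
  have hn2 : (n : ℝ) - 2 ≠ 0 := by linarith
  ext ⟨⟨u, v⟩, huv⟩
  simp only [Pi.smul_apply, Pi.sub_apply, cutVec_splitAssign_apply, cast_card_compl,
    Finset.card_singleton, Finset.card_pair hij.ne, Finset.card_empty, Pi.single_apply,
    Finset.mem_insert, Finset.mem_singleton, Finset.notMem_empty, Subtype.ext_iff, Prod.ext_iff,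
    if_false, Nat.cast_ofNat, Nat.cast_one, Nat.cast_zero, sub_zero, smul_eq_mul]
  by_cases hui : u = i <;> by_cases huj : u = j <;> by_cases hvi : v = i <;>
    by_cases hvj : v = j <;>
    simp [hui, huj, hvi, hvj, hij.ne, hij.ne', not_lt.2 hij.le] at huv ⊢ <;> field_simp <;> ring

lemma single_mem_vectorSpan_cutVec (hn : 3 ≤ n) (hK : 2 ≤ K) (p : PairIdx n) :
    Pi.single p (1 : ℝ) ∈ vectorSpan ℝ {X | ∃ c : Fin n → Fin K, X = cutVec n K c} := by
  obtain ⟨⟨i, j⟩, hij⟩ := p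
  have hsplit (S : Finset (Fin n)) :
      cutVec n K (splitAssign hK S) - cutVec n K (splitAssign hK ∅) ∈
        vectorSpan ℝ {X | ∃ c : Fin n → Fin K, X = cutVec n K c} :=
    vsub_mem_vectorSpan ℝ ⟨_, rfl⟩ ⟨_, rfl⟩
  have hn0 : (n : ℝ) / 2 ≠ 0 := by positivity
  rw [← Submodule.smul_mem_iff _ hn0, smul_single_eq_split_combination hn hK hij]
  exact Submodule.sub_mem _ (Submodule.sub_mem _ (Submodule.smul_mem _ _ (hsplit _))
    (Submodule.smul_mem _ _ (hsplit _))) (Submodule.smul_mem _ _ (hsplit _))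

lemma vectorSpan_cutVec_eq_top (hn : 3 ≤ n) (hK : 2 ≤ K) :
    vectorSpan ℝ {X | ∃ c : Fin n → Fin K, X = cutVec n K c} = ⊤ := by
  rw [eq_top_iff, ← (Pi.basisFun ℝ (PairIdx n)).span_eq, Submodule.span_le]
  rintro _ ⟨p, rfl⟩
  simpa using single_mem_vectorSpan_cutVec hn hK p

lemma affineSpan_rCut_eq_top (hn : 3 ≤ n) (hK : 2 ≤ K) : affineSpan ℝ (RCut n K) = ⊤ := by
  rw [RCut, affineSpan_convexHull]
  refine (AffineSubspace.affineSpan_eq_top_iff_vectorSpan_eq_top_of_nonempty ℝ _ _ ?_).2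
    (vectorSpan_cutVec_eq_top hn hK)
  exact ⟨_, splitAssign hK ∅, rfl⟩

lemma finrank_cutSpace (n : ℕ) : Module.finrank ℝ (CutSpace n) = n * (n - 1) / 2 := by
  rw [Module.finrank_fintype_fun_eq_card, Fintype.card_subtype, Fintype.card_product_filter_lt,
    Fintype.card_fin, Nat.choose_two_right]

end RatioCut

theorem stmt0_general (n K : ℕ) (hn : 3 ≤ n) (hK2 : 2 ≤ K) :
    affineSpan ℝ (RCut n K) = ⊤ ∧
    Module.finrank ℝ (affineSpan ℝ (RCut n K)).direction = n * (n - 1) / 2 := by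
  have htop := RatioCut.affineSpan_rCut_eq_top hn hK2
  refine ⟨htop, ?_⟩
  rw [htop, AffineSubspace.direction_top, finrank_top, RatioCut.finrank_cutSpace]

/-- For all integers n ≥ 3 and 2 ≤ K ≤ n, the ratio-cut polytope
`RCut^K_n` is full-dimensional in ℝ^{n(n−1)/2}: its affine hull is the whole
space, i.e. dim(RCut^K_n) = n(n−1)/2. -/
theorem stmt0 (n K : ℕ) (hn : 3 ≤ n) (hK2 : 2 ≤ K) (hKn : K ≤ n) :
    affineSpan ℝ (RCut n K) = ⊤ ∧
    Module.finrank ℝ (affineSpan ℝ (RCut n K)).direction = n * (n - 1) / 2 :=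
  stmt0_general n K hn hK2
end

section
/- For all integers n ≥ 3 and 2 ≤ K ≤ n, every ratio-cut vector X of a partition of [n] into at most K nonempty clusters satisfies ∑_{1≤i<j≤n} X_{ij} ≥ (n−K)/2 (hence the inequality holds on all of RCut^K_n), and equality holds if and only if the partition has exactly K nonempty clusters. -/
open Finset

/-! Let `w i j = [c i = c j] / |Γ(i)|`, where `Γ(i)` is the cluster of `i`. Every row of `w` sums
to `1`, and its diagonal sums to the number `m` of nonempty clusters, since each cluster `Γ`
contributes `|Γ| · 1/|Γ|`. As `w` is symmetric, twice the sum of the ratio-cut vector over the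
pairs `i < j` is `n - m`; hence `∑ X = (n - m)/2 ≥ (n - K)/2`, with equality iff `m = K`. The
bound is a linear inequality, so it passes to the convex hull `RCut n K`. -/

section SymmetricPairSum

variable {α M : Type*} [Fintype α] [LinearOrder α] [AddCommGroup M]

theorem two_nsmul_sum_lt_pairs {f : α → α → M} (hf : ∀ i j, f i j = f j i) :
    2 • ∑ p : {p : α × α // p.1 < p.2}, f p.1.1 p.1.2 =
      ∑ i, ∑ j, f i j - ∑ i, f i i := by
  have hlt : ∑ p : {p : α × α // p.1 < p.2}, f p.1.1 p.1.2
      = ∑ p : α × α, if p.1 < p.2 then f p.1 p.2 else 0 := by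
    rw [← sum_filter,
      sum_subtype (p := fun q : α × α => q.1 < q.2) _ (by simp) fun p : α × α => f p.1 p.2]
  have hgt : ∑ p : α × α, (if p.2 < p.1 then f p.1 p.2 else 0)
      = ∑ p : α × α, if p.1 < p.2 then f p.1 p.2 else 0 :=
    Fintype.sum_equiv (Equiv.prodComm α α) _ _ fun p => by rw [hf]; rfl
  have hdiag : ∑ p : α × α, (if p.1 = p.2 then f p.1 p.2 else 0) = ∑ i, f i i := by
    simp [Fintype.sum_prod_type]
  have hsplit : ∀ p : α × α, f p.1 p.2 = (if p.1 < p.2 then f p.1 p.2 else 0)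
      + (if p.2 < p.1 then f p.1 p.2 else 0) + (if p.1 = p.2 then f p.1 p.2 else 0) := by
    intro p
    rcases lt_trichotomy p.1 p.2 with h | h | h
    · simp [h, h.not_gt, h.ne]
    · simp [h]
    · simp [h, h.not_gt, h.ne']
  rw [← Fintype.sum_prod_type' f, Fintype.sum_congr _ _ hsplit, sum_add_distrib, sum_add_distrib,
    hgt, hdiag, hlt, two_nsmul]
  abel

end SymmetricPairSum

section ClusterWeight

variable {α β : Type*} [Fintype α] [DecidableEq β]

noncomputable def clusterWeight (c : α → β) (i j : α) : ℝ :=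
  if c i = c j then 1 / #{k | c k = c i} else 0

theorem clusterWeight_comm (c : α → β) (i j : α) :
    clusterWeight c i j = clusterWeight c j i := by
  unfold clusterWeight
  split_ifs <;> simp_all

theorem card_cluster_pos (c : α → β) (i : α) : 0 < #{k | c k = c i} :=
  card_pos.2 ⟨i, by simp⟩

theorem sum_clusterWeight_right (c : α → β) (i : α) : ∑ j, clusterWeight c i j = 1 := by
  have hpos : (0 : ℝ) < #{k | c k = c i} := by exact_mod_cast card_cluster_pos c i
  simp only [clusterWeight, ← sum_filter, sum_const, nsmul_eq_mul, eq_comm (a := c i)]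
  field_simp

theorem sum_clusterWeight_diag (c : α → β) : ∑ i, clusterWeight c i i = #(univ.image c) := by
  rw [← sum_fiberwise_of_maps_to (t := univ.image c) fun i _ => mem_image_of_mem c (mem_univ i),
    cast_card]
  refine sum_congr rfl fun b hb => ?_
  obtain ⟨i, -, rfl⟩ := mem_image.1 hb
  have hpos : (0 : ℝ) < #{k | c k = c i} := by exact_mod_cast card_cluster_pos c i
  rw [sum_congr rfl fun k hk => by rw [clusterWeight, if_pos rfl, (mem_filter.1 hk).2],
    sum_const, nsmul_eq_mul]
  field_simp

end ClusterWeight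

theorem card_image_univ_eq_iff_surjective {α β : Type*} [Fintype α] [Fintype β] [DecidableEq β]
    (c : α → β) : #(univ.image c) = Fintype.card β ↔ Function.Surjective c := by
  rw [card_eq_iff_eq_univ, eq_univ_iff_forall]
  simp [Function.Surjective]

theorem cutVec_eq_clusterWeight (n K : ℕ) (c : Fin n → Fin K) (p : PairIdx n) :
    cutVec n K c p = clusterWeight c p.1.1 p.1.2 :=
  rfl

theorem sum_cutVec (n K : ℕ) (c : Fin n → Fin K) :
    ∑ p : PairIdx n, cutVec n K c p = ((n : ℝ) - #(univ.image c)) / 2 := by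
  have h := two_nsmul_sum_lt_pairs (clusterWeight_comm c)
  simp only [sum_clusterWeight_right, sum_clusterWeight_diag, sum_const, card_univ,
    Fintype.card_fin, nsmul_eq_mul, mul_one, Nat.cast_ofNat] at h
  simp only [cutVec_eq_clusterWeight]
  linarith

theorem stmt1_general (n K : ℕ) :
    (∀ c : Fin n → Fin K, ((n : ℝ) - K) / 2 ≤ ∑ p : PairIdx n, cutVec n K c p) ∧
    (∀ X ∈ RCut n K, ((n : ℝ) - K) / 2 ≤ ∑ p : PairIdx n, X p) ∧
    (∀ c : Fin n → Fin K,
      (∑ p : PairIdx n, cutVec n K c p = ((n : ℝ) - K) / 2) ↔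
        Function.Surjective c) := by
  have hvertex (c : Fin n → Fin K) :
      ((n : ℝ) - K) / 2 ≤ ∑ p : PairIdx n, cutVec n K c p := by
    have hclusters : #(univ.image c) ≤ K := by simpa using card_le_univ (univ.image c)
    rw [sum_cutVec]
    gcongr
  have hlinear : IsLinearMap ℝ fun X : CutSpace n => ∑ p, X p :=
    ⟨fun _ _ => sum_add_distrib, fun _ _ => by simp [mul_sum]⟩
  refine ⟨hvertex, fun X hX => ?_, fun c => ?_⟩
  · refine convexHull_min ?_ (convex_halfSpace_ge hlinear _) hX
    rintro _ ⟨c, rfl⟩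
    exact hvertex c
  · rw [sum_cutVec, div_left_inj' two_ne_zero, sub_right_inj, Nat.cast_inj,
      ← card_image_univ_eq_iff_surjective, Fintype.card_fin]

/-- every ratio-cut vector of a partition of [n] into at most K
nonempty clusters satisfies ∑_{i<j} X_{ij} ≥ (n−K)/2 (hence the inequality holds
on all of RCut^K_n), with equality iff the partition has exactly K nonempty
clusters (iff the cluster assignment is surjective). -/
theorem stmt1 (n K : ℕ) (hn : 3 ≤ n) (hK2 : 2 ≤ K) (hKn : K ≤ n) :
    (∀ c : Fin n → Fin K, ((n : ℝ) - K) / 2 ≤ ∑ p : PairIdx n, cutVec n K c p) ∧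
    (∀ X ∈ RCut n K, ((n : ℝ) - K) / 2 ≤ ∑ p : PairIdx n, X p) ∧
    (∀ c : Fin n → Fin K,
      (∑ p : PairIdx n, cutVec n K c p = ((n : ℝ) - K) / 2) ↔
        Function.Surjective c) :=
  stmt1_general n K
end

section
/- For all integers n ≥ 3 and 2 ≤ K ≤ n, the inequality ∑_{1≤i<j≤n} X_{ij} ≥ (n−K)/2 defines a facet of RCut^K_n — that is, the face {X ∈ RCut^K_n : ∑_{1≤i<j≤n} X_{ij} = (n−K)/2} has affine dimension n(n−1)/2 − 1 — if and only if K ≤ n−1. -/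
/-!
Write a ratio-cut vector as `∑_Γ |Γ|⁻¹ • 1_Γ`, where `1_Γ` indicates the pairs inside the cluster
`Γ`. Summing coordinates gives `∑_Γ (|Γ| - 1)/2 = (n - k)/2` for a partition into `k` clusters, so
the face lies in the hyperplane `∑ X = (n - K)/2` and contains every partition into exactly `K`
clusters. For `K = n` nonnegativity forces the face to be `{0}`. For `K ≤ n - 1` the differences of
those partitions span the direction of the hyperplane, since they produce `e_ij - e_ik` for distinct
`i, j, k`: for `K ≥ 3` swap `j` and `k` in a partition with clusters `{i, j}` and `{k}`; for `K = 2`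
combine the two-block partitions cut off by `{i, j}`, `{i, k}`, `{j}` and `{k}`.
-/

open Finset

namespace RatioCut

variable {n K : ℕ}

lemma vectorSpan_le_ker {k V W : Type*} [Ring k] [AddCommGroup V] [Module k V]
    [AddCommGroup W] [Module k W] (f : V →ₗ[k] W) {s : Set V} {t : W} (h : ∀ x ∈ s, f x = t) :
    vectorSpan k s ≤ LinearMap.ker f := by
  rw [vectorSpan_def, Submodule.span_le]
  rintro _ ⟨x, hx, y, hy, rfl⟩
  simp [h x hx, h y hy]

def pairInd (S : Finset (Fin n)) : CutSpace n := fun p => if p.1.1 ∈ S ∧ p.1.2 ∈ S then 1 else 0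

def coordSum (n : ℕ) : CutSpace n →ₗ[ℝ] ℝ where
  toFun X := ∑ p, X p
  map_add' X Y := by simp [sum_add_distrib]
  map_smul' r X := by simp [mul_sum]

@[simp] lemma coordSum_apply (X : CutSpace n) : coordSum n X = ∑ p, X p := rfl

@[simp] lemma pairInd_singleton (i : Fin n) : pairInd {i} = 0 := by
  funext p
  simp only [pairInd, mem_singleton, Pi.zero_apply, ite_eq_right_iff, one_ne_zero, imp_false,
    not_and]
  exact fun h1 h2 => p.2.ne (h1.trans h2.symm)

lemma pairInd_pair_eq_single (p : PairIdx n) : pairInd {p.1.1, p.1.2} = Pi.single p 1 := by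
  funext q
  obtain ⟨⟨a, b⟩, hab⟩ := p
  obtain ⟨⟨a', b'⟩, hab'⟩ := q
  simp only [pairInd, mem_insert, mem_singleton, Pi.single_apply, Subtype.mk.injEq,
    Prod.mk.injEq]
  congr 1
  apply propext
  constructor
  · rintro ⟨rfl | rfl, rfl | rfl⟩ <;> simp_all [lt_asymm]
  · rintro ⟨rfl, rfl⟩
    simp

lemma coordSum_pairInd (S : Finset (Fin n)) : coordSum n (pairInd S) = (#S).choose 2 := by
  rw [← card_product_filter_lt]
  simp only [coordSum_apply, pairInd, sum_boole]
  norm_cast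
  refine card_bij (fun p _ => p.1) ?_ (fun p _ q _ => Subtype.ext) ?_
  · simp +contextual
  · simp only [mem_filter, mem_univ, mem_product]
    exact fun x hx => ⟨⟨x, hx.2⟩, by simpa using hx.1⟩

lemma card_pairIdx (n : ℕ) : Fintype.card (PairIdx n) = n * (n - 1) / 2 := by
  rw [Fintype.card_subtype, Fintype.card_product_filter_lt, Fintype.card_fin,
    Nat.choose_two_right]

lemma cutVec_eq_sum_smul_pairInd (c : Fin n → Fin K) :
    cutVec n K c = ∑ v, ((#{x | c x = v} : ℕ) : ℝ)⁻¹ • pairInd {x | c x = v} := by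
  funext p
  simp only [cutVec, pairInd, Finset.sum_apply, Pi.smul_apply, mem_filter, mem_univ, true_and,
    smul_eq_mul, mul_ite, mul_one, mul_zero]
  split_ifs with h
  · rw [sum_eq_single (c p.1.1)] <;> grind
  · exact (sum_eq_zero fun v _ => by grind).symm

lemma coordSum_cutVec {c : Fin n → Fin K} (hc : Function.Surjective c) :
    coordSum n (cutVec n K c) = ((n : ℝ) - K) / 2 := by
  have hfiber (v : Fin K) : (#{x | c x = v} : ℝ) ≠ 0 := by
    obtain ⟨x, rfl⟩ := hc v
    exact Nat.cast_ne_zero.2 (card_ne_zero.2 ⟨x, by simp⟩)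
  have hcard : ∑ v, (#{x | c x = v} : ℝ) = n := by
    rw [← Nat.cast_sum, ← card_eq_sum_card_fiberwise fun _ _ => mem_univ _, card_univ,
      Fintype.card_fin]
  calc coordSum n (cutVec n K c)
      = ∑ v, ((#{x | c x = v} : ℝ) - 1) / 2 := by
        rw [cutVec_eq_sum_smul_pairInd, map_sum]
        refine sum_congr rfl fun v _ => ?_
        rw [map_smul, coordSum_pairInd, Nat.cast_choose_two, smul_eq_mul]
        field_simp [hfiber v]
    _ = ((n : ℝ) - K) / 2 := by
        rw [← sum_div, sum_sub_distrib, hcard]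
        simp

lemma cutVec_nonneg (c : Fin n → Fin K) : 0 ≤ cutVec n K c := fun p => by
  unfold cutVec
  split_ifs <;> positivity

lemma eq_zero_of_mem_RCut_of_sum_eq_zero {X : CutSpace n} (hX : X ∈ RCut n K)
    (hsum : ∑ p, X p = 0) : X = 0 := by
  have hX0 : 0 ≤ X := convexHull_min (by rintro _ ⟨c, rfl⟩; exact cutVec_nonneg c)
    (convex_Ici 0) hX
  exact (Fintype.sum_eq_zero_iff_of_nonneg hX0).1 hsum

lemma pairInd_compl_pair {i j k : Fin n} (hij : i ≠ j) (hik : i ≠ k) (hjk : j ≠ k) :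
    pairInd {i, j}ᶜ
      = pairInd {i, k}ᶜ + pairInd {j}ᶜ - pairInd {k}ᶜ + (pairInd {i, j} - pairInd {i, k}) := by
  funext p
  have hp := p.2.ne
  simp only [pairInd, Pi.add_apply, Pi.sub_apply, mem_compl, mem_insert, mem_singleton]
  split_ifs <;> grind

def twoBlock (S : Finset (Fin n)) : Fin n → Fin 2 := fun x => if x ∈ S then 0 else 1

lemma cutVec_twoBlock (S : Finset (Fin n)) :
    cutVec n 2 (twoBlock S) = (#S : ℝ)⁻¹ • pairInd S + (#Sᶜ : ℝ)⁻¹ • pairInd Sᶜ := by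
  have h0 : ({x | twoBlock S x = 0} : Finset (Fin n)) = S := by ext; simp [twoBlock]
  have h1 : ({x | twoBlock S x = 1} : Finset (Fin n)) = Sᶜ := by ext; simp [twoBlock]
  rw [cutVec_eq_sum_smul_pairInd, Fin.sum_univ_two, h0, h1]

lemma twoBlock_surjective {S : Finset (Fin n)} {a b : Fin n} (ha : a ∈ S) (hb : b ∉ S) :
    Function.Surjective (twoBlock S) := by
  intro v
  fin_cases v
  · exact ⟨a, by simp [twoBlock, ha]⟩
  · exact ⟨b, by simp [twoBlock, hb]⟩

lemma cutVec_sub_cutVec_comp_swap {c : Fin n → Fin K} {i j k : Fin n} (hij : i ≠ j)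
    (hjk : j ≠ k) (hci : ∀ x, c x = c i ↔ x = i ∨ x = j) (hck : ∀ x, c x = c k ↔ x = k) :
    cutVec n K c - cutVec n K (c ∘ Equiv.swap j k)
      = (2⁻¹ : ℝ) • (pairInd {i, j} - pairInd {i, k}) := by
  have hik : i ≠ k := fun h => hjk ((hck j).1 ((hci j).2 (Or.inr rfl) |>.trans (congrArg c h)))
  have hcik : c i ≠ c k := fun h => hik ((hck i).1 h)
  have hF_i : ({x | c x = c i} : Finset (Fin n)) = {i, j} := by ext; simp [hci]
  have hF_k : ({x | c x = c k} : Finset (Fin n)) = {k} := by ext; simp [hck]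
  have hF'_i : ({x | (c ∘ Equiv.swap j k) x = c i} : Finset (Fin n)) = {i, k} := by
    ext x; simp [hci, Equiv.swap_apply_eq_iff, Equiv.swap_apply_of_ne_of_ne hij hik]
  have hF'_k : ({x | (c ∘ Equiv.swap j k) x = c k} : Finset (Fin n)) = {j} := by
    ext x; simp [hck, Equiv.swap_apply_eq_iff]
  have hF' (v : Fin K) (hv : v ≠ c i ∧ v ≠ c k) :
      ({x | (c ∘ Equiv.swap j k) x = v} : Finset (Fin n)) = ({x | c x = v} : Finset (Fin n)) := by
    ext x
    simp only [mem_filter, mem_univ, true_and, Function.comp_apply]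
    rcases eq_or_ne x j with rfl | hxj
    · simp [(hci x).2 (Or.inr rfl), Ne.symm hv.1, Ne.symm hv.2]
    rcases eq_or_ne x k with rfl | hxk
    · simp [(hci j).2 (Or.inr rfl), Ne.symm hv.1, Ne.symm hv.2]
    rw [Equiv.swap_apply_of_ne_of_ne hxj hxk]
  rw [cutVec_eq_sum_smul_pairInd, cutVec_eq_sum_smul_pairInd, ← sum_sub_distrib,
    Fintype.sum_eq_add (c i) (c k) hcik (fun v hv => by rw [hF' v hv, sub_self]),
    hF_i, hF_k, hF'_i, hF'_k, card_pair hij, card_pair hik]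
  simp [smul_sub]

lemma exists_surjective_fiber_pair_singleton (hK : 3 ≤ K) (hKn : K < n) {i j k : Fin n}
    (hij : i ≠ j) (hik : i ≠ k) (hjk : j ≠ k) :
    ∃ c : Fin n → Fin K, Function.Surjective c ∧
      (∀ x, c x = c i ↔ x = i ∨ x = j) ∧ ∀ x, c x = c k ↔ x = k := by
  obtain ⟨ρ, hρ⟩ := Equiv.Perm.exists_extending_pair ![i, j, k]
    ![⟨0, by omega⟩, ⟨1, by omega⟩, ⟨2, by omega⟩]
    (by
      intro a b
      fin_cases a <;> fin_cases b <;> simp [hij, hik, hjk, hij.symm, hik.symm, hjk.symm])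
    (by intro a b; fin_cases a <;> fin_cases b <;> simp)
  have hρi : (ρ i).val = 0 := congrArg Fin.val (hρ 0)
  have hρj : (ρ j).val = 1 := congrArg Fin.val (hρ 1)
  have hρk : (ρ k).val = 2 := congrArg Fin.val (hρ 2)
  have hρ_eq (x y : Fin n) : x = y ↔ (ρ x).val = (ρ y).val := by
    rw [← ρ.injective.eq_iff, Fin.ext_iff]
  -- after relabelling `i, j, k` as `0, 1, 2`, the clusters are `{0, 1}, {2}, {3}, …, {K - 1, …}`
  refine ⟨fun x => ⟨min ((ρ x).val - 1) (K - 1), by omega⟩, fun v => ?_, fun x => ?_, fun x => ?_⟩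
  · refine ⟨ρ.symm ⟨v + 1, by omega⟩, Fin.ext ?_⟩
    simp only [Equiv.apply_symm_apply]
    omega
  · rw [Fin.mk.injEq, hρ_eq x i, hρ_eq x j, hρi, hρj]
    omega
  · rw [Fin.mk.injEq, hρ_eq x k, hρk]
    omega

section Span

variable {s : Set (CutSpace n)}

lemma pairInd_sub_mem_vectorSpan_of_two
    (hs : ∀ c : Fin n → Fin 2, Function.Surjective c → cutVec n 2 c ∈ s)
    {i j k : Fin n} (hij : i ≠ j) (hik : i ≠ k) (hjk : j ≠ k) :
    pairInd {i, j} - pairInd {i, k} ∈ vectorSpan ℝ s := by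
  have hn : 3 ≤ n := by
    have := card_le_univ ({i, j, k} : Finset (Fin n))
    rwa [card_eq_three.2 ⟨i, j, k, hij, hik, hjk, rfl⟩, Fintype.card_fin] at this
  have hmem (S : Finset (Fin n)) {a b : Fin n} (ha : a ∈ S) (hb : b ∉ S) :
      cutVec n 2 (twoBlock S) ∈ s :=
    hs _ (twoBlock_surjective ha hb)
  have hA := vsub_mem_vectorSpan ℝ
    (hmem {i, j} (mem_insert_self i _) (b := k) (by simp [hik.symm, hjk.symm]))
    (hmem {i, k} (mem_insert_self i _) (b := j) (by simp [hij.symm, hjk]))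
  have hB := vsub_mem_vectorSpan ℝ (hmem {j} (mem_singleton_self j) (b := k) (by simp [hjk.symm]))
    (hmem {k} (mem_singleton_self k) (b := j) (by simp [hjk]))
  simp only [vsub_eq_sub, cutVec_twoBlock, card_compl, card_pair hij, card_pair hik,
    card_singleton, pairInd_singleton, Fintype.card_fin, smul_zero, zero_add] at hA hB
  rw [Nat.cast_sub (by omega), Nat.cast_ofNat] at hA
  rw [Nat.cast_sub (by omega), Nat.cast_one] at hB
  have hn3 : (3 : ℝ) ≤ n := by exact_mod_cast hn
  have hn0 : (n : ℝ) ≠ 0 := by positivity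
  have hn2 : (n : ℝ) - 2 ≠ 0 := by linarith
  have hn1 : (n : ℝ) - 1 ≠ 0 := by linarith
  -- the weights `n - 2` and `n - 1` make the complementary blocks cancel up to `e_ij - e_ik`
  convert (vectorSpan ℝ s).smul_mem (2 / n : ℝ) <| (vectorSpan ℝ s).sub_mem
    ((vectorSpan ℝ s).smul_mem ((n : ℝ) - 2) hA) ((vectorSpan ℝ s).smul_mem ((n : ℝ) - 1) hB)
    using 1
  rw [pairInd_compl_pair hij hik hjk]
  match_scalars <;> field_simp <;> ring

lemma pairInd_sub_mem_vectorSpan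
    (hs : ∀ c : Fin n → Fin K, Function.Surjective c → cutVec n K c ∈ s)
    (hK : 2 ≤ K) (hKn : K < n) {i j k : Fin n} (hij : i ≠ j) (hik : i ≠ k) :
    pairInd {i, j} - pairInd {i, k} ∈ vectorSpan ℝ s := by
  rcases eq_or_ne j k with rfl | hjk
  · rw [sub_self]
    exact zero_mem _
  rcases hK.eq_or_lt with rfl | hK3
  · exact pairInd_sub_mem_vectorSpan_of_two hs hij hik hjk
  obtain ⟨c, hc, hci, hck⟩ := exists_surjective_fiber_pair_singleton hK3 hKn hij hik hjk
  have h := vsub_mem_vectorSpan ℝ (hs c hc) (hs _ (hc.comp (Equiv.swap j k).surjective))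
  rw [vsub_eq_sub, cutVec_sub_cutVec_comp_swap hij hjk hci hck] at h
  simpa using (vectorSpan ℝ s).smul_mem 2 h

lemma single_sub_single_mem_vectorSpan
    (hs : ∀ c : Fin n → Fin K, Function.Surjective c → cutVec n K c ∈ s)
    (hK : 2 ≤ K) (hKn : K < n) (p q : PairIdx n) :
    Pi.single p 1 - Pi.single q 1 ∈ vectorSpan ℝ s := by
  obtain ⟨⟨i, j⟩, hij⟩ := p
  obtain ⟨⟨k, l⟩, hkl⟩ := q
  rw [← pairInd_pair_eq_single, ← pairInd_pair_eq_single]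
  rcases eq_or_ne i k with rfl | hik
  · exact pairInd_sub_mem_vectorSpan hs hK hKn hij.ne hkl.ne
  have h1 := pairInd_sub_mem_vectorSpan hs hK hKn hij.ne hik
  have h2 := pairInd_sub_mem_vectorSpan hs hK hKn hik.symm hkl.ne
  rw [pair_comm k i] at h2
  simpa using add_mem h1 h2

lemma ker_coordSum_le_vectorSpan
    (hs : ∀ c : Fin n → Fin K, Function.Surjective c → cutVec n K c ∈ s)
    (hK : 2 ≤ K) (hKn : K < n) : LinearMap.ker (coordSum n) ≤ vectorSpan ℝ s := by
  intro X hX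
  rw [LinearMap.mem_ker, coordSum_apply] at hX
  let p₀ : PairIdx n := ⟨(⟨0, by omega⟩, ⟨1, by omega⟩), Fin.mk_lt_mk.2 zero_lt_one⟩
  have hX' : X = ∑ p, X p • (Pi.single p 1 - Pi.single p₀ 1) := by
    simp only [smul_sub, sum_sub_distrib, ← sum_smul, hX, zero_smul, sub_zero]
    exact pi_eq_sum_univ' X
  rw [hX']
  exact sum_mem fun p _ => Submodule.smul_mem _ _ (single_sub_single_mem_vectorSpan hs hK hKn p p₀)

end Span

lemma finrank_ker_coordSum (hn : 2 ≤ n) :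
    Module.finrank ℝ (LinearMap.ker (coordSum n)) = n * (n - 1) / 2 - 1 := by
  let p₀ : PairIdx n := ⟨(⟨0, by omega⟩, ⟨1, by omega⟩), Fin.mk_lt_mk.2 zero_lt_one⟩
  have hne : coordSum n ≠ 0 := fun h => by
    simpa using LinearMap.congr_fun h (Pi.single p₀ 1)
  have := Module.Dual.finrank_ker_add_one_of_ne_zero hne
  rw [Module.finrank_fintype_fun_eq_card, card_pairIdx] at this
  omega

end RatioCut

/-- for n ≥ 3 and 2 ≤ K ≤ n, the inequality ∑_{i<j} X_{ij} ≥ (n−K)/2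
defines a facet of RCut^K_n — the face where it is tight has affine dimension
n(n−1)/2 − 1 — if and only if K ≤ n−1. -/
theorem stmt3 (n K : ℕ) (hn : 3 ≤ n) (hK2 : 2 ≤ K) (hKn : K ≤ n) :
    (Module.finrank ℝ
        (affineSpan ℝ
          {X ∈ RCut n K | ∑ p : PairIdx n, X p = ((n : ℝ) - K) / 2}).direction =
      n * (n - 1) / 2 - 1) ↔ K ≤ n - 1 := by
  set F := {X ∈ RCut n K | ∑ p : PairIdx n, X p = ((n : ℝ) - K) / 2}
  have hN : 6 ≤ n * (n - 1) := Nat.mul_le_mul hn (by omega : 2 ≤ n - 1)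
  rw [direction_affineSpan]
  rcases hKn.lt_or_eq with hlt | rfl
  · have hF : vectorSpan ℝ F = LinearMap.ker (RatioCut.coordSum n) :=
      le_antisymm (RatioCut.vectorSpan_le_ker _ fun X hX => hX.2)
        (RatioCut.ker_coordSum_le_vectorSpan
          (fun c hc => ⟨subset_convexHull ℝ _ ⟨c, rfl⟩, RatioCut.coordSum_cutVec hc⟩) hK2 hlt)
    rw [hF, RatioCut.finrank_ker_coordSum (by omega)]
    exact iff_of_true rfl (by omega)
  · have hF : vectorSpan ℝ F = ⊥ := by
      rw [← le_bot_iff, ← vectorSpan_singleton ℝ (0 : CutSpace _)]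
      exact vectorSpan_mono ℝ fun X hX =>
        RatioCut.eq_zero_of_mem_RCut_of_sum_eq_zero hX.1 (by simp [hX.2])
    rw [hF, finrank_bot]
    exact iff_of_false (by omega) (by omega)
end

section
/- For all integers n ≥ 3 and 2 ≤ K ≤ n, for every l ∈ [n] and every nonempty T ⊆ [n]∖{l}, every ratio-cut vector X of a partition of [n] into at most K nonempty clusters satisfies 2∑_{j∈T} X_{lj} + ∑_{j∈[n]∖(T∪{l})} X_{lj} ≤ 1 + ∑_{i,j∈T, i<j} X_{ij}; hence this inequality holds on all of RCut^K_n. -/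
open Finset

section Entries

variable {n : ℕ}

lemma ent_self (X : CutSpace n) (i : Fin n) : ent X i i = 0 := by
  simp [ent]

lemma ent_comm (X : CutSpace n) (i j : Fin n) : ent X i j = ent X j i := by
  unfold ent
  split_ifs <;> first | rfl | (exfalso; omega)

lemma ent_min_max (X : CutSpace n) (i j : Fin n) : ent X (min i j) (max i j) = ent X i j := by
  rcases le_total i j with h | h
  · rw [min_eq_left h, max_eq_right h]
  · rw [min_eq_right h, max_eq_left h, ent_comm]

lemma ent_pair (X : CutSpace n) (p : PairIdx n) : ent X p.1.1 p.1.2 = X p :=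
  dif_pos p.2

lemma ent_nonneg {X : CutSpace n} (hX : ∀ p, 0 ≤ X p) (i j : Fin n) : 0 ≤ ent X i j := by
  unfold ent
  split_ifs
  exacts [hX _, hX _, le_rfl]

lemma ent_add (X Y : CutSpace n) (i j : Fin n) : ent (X + Y) i j = ent X i j + ent Y i j := by
  unfold ent; split_ifs <;> simp

lemma ent_smul (a : ℝ) (X : CutSpace n) (i j : Fin n) : ent (a • X) i j = a * ent X i j := by
  unfold ent; split_ifs <;> simp

lemma pairSumOn_add (X Y : CutSpace n) (T : Finset (Fin n)) :
    pairSumOn (X + Y) T = pairSumOn X T + pairSumOn Y T := by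
  simp only [pairSumOn, ← sum_add_distrib]
  congr! 1
  split_ifs <;> simp

lemma pairSumOn_smul (a : ℝ) (X : CutSpace n) (T : Finset (Fin n)) :
    pairSumOn (a • X) T = a * pairSumOn X T := by
  simp only [pairSumOn, mul_sum]
  congr! 1
  split_ifs <;> simp

lemma pairSumOn_eq_sum_ent (X : CutSpace n) (T : Finset (Fin n)) :
    pairSumOn X T = ∑ q ∈ (T ×ˢ T).filter (fun q => q.1 < q.2), ent X q.1 q.2 := by
  calc pairSumOn X T = ∑ p : PairIdx n, if p.1 ∈ T ×ˢ T then ent X p.1.1 p.1.2 else 0 := by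
        simp only [pairSumOn, ent_pair, mem_product]
    _ = ∑ q ∈ univ.filter (fun q : Fin n × Fin n => q.1 < q.2),
          if q ∈ T ×ˢ T then ent X q.1 q.2 else 0 :=
        (sum_subtype _ (by simp) fun q => if q ∈ T ×ˢ T then ent X q.1 q.2 else 0).symm
    _ = _ := by
        rw [← sum_filter]
        congr 1
        ext q
        simp only [mem_filter, mem_univ, true_and]
        tauto

lemma pairSumOn_nonneg {X : CutSpace n} (hX : ∀ p, 0 ≤ X p) (T : Finset (Fin n)) :
    0 ≤ pairSumOn X T :=
  sum_nonneg fun p _ => by split_ifs; exacts [hX p, le_rfl]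

lemma sum_ent_le_pairSumOn {X : CutSpace n} (hX : ∀ p, 0 ≤ X p) {T : Finset (Fin n)}
    {s : Fin n} (hs : s ∈ T) : ∑ j ∈ T, ent X s j ≤ pairSumOn X T := by
  have hinj : Set.InjOn (fun j => (min s j, max s j)) (T.erase s) := fun j _ j' _ h => by
    simp only [Prod.mk.injEq] at h
    grind
  calc ∑ j ∈ T, ent X s j = ∑ j ∈ T.erase s, ent X (min s j) (max s j) := by
        simp only [ent_min_max, ← sum_erase_add T _ hs, ent_self, add_zero]
    _ = ∑ q ∈ (T.erase s).image fun j => (min s j, max s j), ent X q.1 q.2 :=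
        (sum_image (f := fun q => ent X q.1 q.2) hinj).symm
    _ ≤ ∑ q ∈ (T ×ˢ T).filter (fun q => q.1 < q.2), ent X q.1 q.2 := by
        refine sum_le_sum_of_subset_of_nonneg ?_ fun q _ _ => ent_nonneg hX _ _
        simp only [subset_iff, mem_image, mem_erase, mem_filter, mem_product]
        rintro _ ⟨j, ⟨hjs, hjT⟩, rfl⟩
        refine ⟨⟨?_, ?_⟩, min_lt_max.2 (Ne.symm hjs)⟩
        · rcases min_choice s j with h | h <;> rwa [h]
        · rcases max_choice s j with h | h <;> rwa [h]
    _ = pairSumOn X T := (pairSumOn_eq_sum_ent X T).symm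

lemma two_mul_sum_ent_add_sum_ent_compl (X : CutSpace n) {l : Fin n} {T : Finset (Fin n)}
    (hlT : l ∉ T) :
    2 * ∑ j ∈ T, ent X l j + ∑ j ∈ univ \ insert l T, ent X l j
      = ∑ j ∈ T, ent X l j + ∑ j, ent X l j := by
  rw [← sum_sdiff (subset_univ (insert l T)), sum_insert hlT, ent_self]
  ring

def starHalfSpace (l : Fin n) (T : Finset (Fin n)) : Set (CutSpace n) :=
  {X | 2 * ∑ j ∈ T, ent X l j + ∑ j ∈ univ \ insert l T, ent X l j ≤ 1 + pairSumOn X T}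

lemma convex_starHalfSpace (l : Fin n) (T : Finset (Fin n)) : Convex ℝ (starHalfSpace l T) := by
  intro Y hY Z hZ a b ha hb hab
  simp only [starHalfSpace, Set.mem_ofPred_eq, ent_add, ent_smul, pairSumOn_add, pairSumOn_smul,
    sum_add_distrib, ← mul_sum] at hY hZ ⊢
  linarith [mul_le_mul_of_nonneg_left hY ha, mul_le_mul_of_nonneg_left hZ hb]

end Entries

section RatioCutVector

variable {n K : ℕ} (c : Fin n → Fin K)

lemma cutVec_nonneg (p : PairIdx n) : 0 ≤ cutVec n K c p := by
  unfold cutVec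
  split_ifs <;> positivity

lemma ent_cutVec {i j : Fin n} (hij : i ≠ j) :
    ent (cutVec n K c) i j = if c j = c i then 1 / (#{k | c k = c i} : ℝ) else 0 := by
  rcases hij.lt_or_gt with h | h
  · simp [ent, cutVec, h, eq_comm]
  · rw [ent_comm]
    simp only [ent, cutVec, h, dif_pos]
    split_ifs with hc <;> simp [hc]

lemma sum_ent_cutVec_add (i : Fin n) :
    ∑ j, ent (cutVec n K c) i j + 1 / (#{k | c k = c i} : ℝ) = 1 := by
  have hrow : ∀ j ∈ univ.erase i,
      ent (cutVec n K c) i j = if c j = c i then 1 / (#{k | c k = c i} : ℝ) else 0 :=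
    fun j hj => ent_cutVec c (ne_of_mem_erase hj).symm
  have hcard : (#{k | c k = c i} : ℝ) ≠ 0 := by
    exact_mod_cast (card_pos.2 ⟨i, by simp⟩).ne'
  calc ∑ j, ent (cutVec n K c) i j + 1 / (#{k | c k = c i} : ℝ)
      = ∑ j ∈ univ.erase i, ent (cutVec n K c) i j + 1 / (#{k | c k = c i} : ℝ) := by
        rw [← sum_erase_add _ _ (mem_univ i), ent_self, add_zero]
    _ = ∑ j, if c j = c i then 1 / (#{k | c k = c i} : ℝ) else 0 := by
        rw [sum_congr rfl hrow, ← sum_erase_add _ _ (mem_univ i), if_pos rfl]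
    _ = 1 := by
        rw [← sum_filter, sum_const, nsmul_eq_mul, mul_one_div, div_self hcard]

lemma cutVec_mem_starHalfSpace (l : Fin n) {T : Finset (Fin n)} (hlT : l ∉ T) :
    cutVec n K c ∈ starHalfSpace l T := by
  set X := cutVec n K c
  have hrow := sum_ent_cutVec_add c l
  have hne : ∀ j ∈ T, l ≠ j := fun j hj h => hlT (h ▸ hj)
  simp only [starHalfSpace, Set.mem_ofPred_eq, two_mul_sum_ent_add_sum_ent_compl X hlT]
  by_cases h : ∃ s ∈ T, c s = c l
  · obtain ⟨s, hsT, hs⟩ := h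
    have hshift : ∑ j ∈ T, ent X l j = ent X l s + ∑ j ∈ T, ent X s j := by
      rw [← add_sum_erase T _ hsT, ← add_sum_erase T (ent X s) hsT, ent_self, zero_add]
      refine congrArg _ (sum_congr rfl fun j hj => ?_)
      rw [ent_cutVec c (hne j (mem_of_mem_erase hj)), ent_cutVec c (ne_of_mem_erase hj).symm, hs]
    rw [hshift, ent_cutVec c (hne s hsT), if_pos hs]
    linarith [sum_ent_le_pairSumOn (cutVec_nonneg c) hsT]
  · push Not at h
    have hzero : ∑ j ∈ T, ent X l j = 0 :=
      sum_eq_zero fun j hj => by rw [ent_cutVec c (hne j hj), if_neg (h j hj)]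
    have hinv : (0 : ℝ) ≤ 1 / #{k | c k = c l} := by positivity
    linarith [pairSumOn_nonneg (cutVec_nonneg c) T]

end RatioCutVector

theorem stmt4_general (n K : ℕ) (l : Fin n) (T : Finset (Fin n)) (hlT : l ∉ T) :
    ∀ X ∈ RCut n K,
      2 * ∑ j ∈ T, ent X l j + ∑ j ∈ Finset.univ \ insert l T, ent X l j
        ≤ 1 + pairSumOn X T := by
  intro X hX
  refine convexHull_min ?_ (convex_starHalfSpace l T) hX
  rintro _ ⟨c, rfl⟩
  exact cutVec_mem_starHalfSpace c l hlT

/-- for n ≥ 3, 2 ≤ K ≤ n, l ∈ [n] and nonempty T ⊆ [n]∖{l}, the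
inequality 2∑_{j∈T} X_{lj} + ∑_{j∉T∪{l}} X_{lj} ≤ 1 + ∑_{i<j∈T} X_{ij} holds on
all of RCut^K_n (in particular for every ratio-cut vector of a partition of [n]
into at most K nonempty clusters). -/
theorem stmt4 (n K : ℕ) (hn : 3 ≤ n) (hK2 : 2 ≤ K) (hKn : K ≤ n)
    (l : Fin n) (T : Finset (Fin n)) (hlT : l ∉ T) (hT : T.Nonempty) :
    ∀ X ∈ RCut n K,
      2 * ∑ j ∈ T, ent X l j + ∑ j ∈ Finset.univ \ insert l T, ent X l j
        ≤ 1 + pairSumOn X T :=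
  stmt4_general n K l T hlT
end

section
/- Let n ≥ 3 be an integer and let X ∈ ℝ^{n×n} be a symmetric matrix satisfying ∑_{j=1}^n X_{ij} = 1 for every i ∈ [n] and X_{ij} + X_{ik} ≤ X_{ii} + X_{jk} for all pairwise distinct i, j, k ∈ [n]. Then X_{ij} ≤ X_{ii} for all i ≠ j ∈ [n]. -/
/-!
Summing the triangle inequality `X i j + X i k ≤ X i i + X j k` over the `n - 2` indices
`k ∉ {i, j}` and using the equal row sums gives `(n - 2) X i j ≤ (n - 1) X i i - X j j`.
Adding this to the same inequality with `i` and `j` swapped gives `2 X i j ≤ X i i + X j j`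
(this is where `n ≥ 3` enters); substituting the bound on `X j j` back yields `n X i j ≤ n X i i`.
-/

open Finset

namespace RowSumTriangle

variable {ι : Type*} [Fintype ι] {X : ι → ι → ℝ} {c : ℝ}

lemma sum_compl_pair [DecidableEq ι] (hrow : ∀ i, ∑ j, X i j = c) {i j : ι} (hij : i ≠ j)
    (m : ι) : ∑ k ∈ {i, j}ᶜ, X m k = c - X m i - X m j := by
  have h := sum_add_sum_compl {i, j} (X m)
  rw [sum_pair hij, hrow m] at h
  linarith

lemma card_compl_pair [DecidableEq ι] {i j : ι} (hij : i ≠ j) :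
    (#({i, j}ᶜ : Finset ι) : ℝ) = Fintype.card ι - 2 := by
  have h2 : 2 ≤ Fintype.card ι := by
    simpa [card_pair hij] using card_le_univ ({i, j} : Finset ι)
  rw [card_compl, card_pair hij, Nat.cast_sub h2, Nat.cast_ofNat]

lemma card_sub_two_mul_le (hsymm : ∀ i j, X i j = X j i) (hrow : ∀ i, ∑ j, X i j = c)
    (htri : ∀ i j k, i ≠ j → i ≠ k → j ≠ k → X i j + X i k ≤ X i i + X j k)
    {i j : ι} (hij : i ≠ j) :
    (Fintype.card ι - 2) * X i j ≤ (Fintype.card ι - 1) * X i i - X j j := by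
  classical
  have hsum : ∑ k ∈ {i, j}ᶜ, (X i j + X i k) ≤ ∑ k ∈ {i, j}ᶜ, (X i i + X j k) := by
    refine sum_le_sum fun k hk => ?_
    have hk' : k ≠ i ∧ k ≠ j := by simpa [not_or] using hk
    exact htri i j k hij (Ne.symm hk'.1) (Ne.symm hk'.2)
  simp only [sum_add_distrib, sum_const, nsmul_eq_mul, card_compl_pair hij,
    sum_compl_pair hrow hij] at hsum
  linarith [hsymm j i]

lemma two_mul_le_add_diag (hcard : 3 ≤ Fintype.card ι) (hsymm : ∀ i j, X i j = X j i)
    (hrow : ∀ i, ∑ j, X i j = c)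
    (htri : ∀ i j k, i ≠ j → i ≠ k → j ≠ k → X i j + X i k ≤ X i i + X j k)
    {i j : ι} (hij : i ≠ j) : 2 * X i j ≤ X i i + X j j := by
  have hbound_ij := card_sub_two_mul_le hsymm hrow htri hij
  have hbound_ji := card_sub_two_mul_le hsymm hrow htri hij.symm
  rw [hsymm j i] at hbound_ji
  have hpos : (0 : ℝ) < Fintype.card ι - 2 := by
    have : (3 : ℝ) ≤ Fintype.card ι := by exact_mod_cast hcard
    linarith
  exact le_of_mul_le_mul_left (by linarith) hpos

theorem le_diag (hcard : 3 ≤ Fintype.card ι) (hsymm : ∀ i j, X i j = X j i)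
    (hrow : ∀ i, ∑ j, X i j = c)
    (htri : ∀ i j k, i ≠ j → i ≠ k → j ≠ k → X i j + X i k ≤ X i i + X j k)
    {i j : ι} (hij : i ≠ j) : X i j ≤ X i i := by
  have hbound := card_sub_two_mul_le hsymm hrow htri hij
  have hdiag := two_mul_le_add_diag hcard hsymm hrow htri hij
  have hpos : (0 : ℝ) < Fintype.card ι := by
    have : (3 : ℝ) ≤ Fintype.card ι := by exact_mod_cast hcard
    linarith
  exact le_of_mul_le_mul_left (by linarith) hpos

end RowSumTriangle

/-- a symmetric matrix with unit row sums satisfying the generalized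
triangle inequalities X_{ij} + X_{ik} ≤ X_{ii} + X_{jk} (for pairwise distinct
i, j, k) also satisfies the row-wise dominance X_{ij} ≤ X_{ii} for all i ≠ j. -/
theorem stmt10 (n : ℕ) (hn : 3 ≤ n) (X : Fin n → Fin n → ℝ)
    (hsymm : ∀ i j, X i j = X j i)
    (hrow : ∀ i, ∑ j, X i j = 1)
    (htri : ∀ i j k : Fin n, i ≠ j → i ≠ k → j ≠ k →
      X i j + X i k ≤ X i i + X j k) :
    ∀ i j : Fin n, i ≠ j → X i j ≤ X i i :=
  fun _ _ hij => RowSumTriangle.le_diag (by simpa using hn) hsymm hrow htri hij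
end

section
/- For every real Δ ≥ 2 and every u ∈ [−1, 1], one has √(1 − u²) ≤ (u + Δ) − (u + Δ)² / (4(u + Δ + 2)). -/
/-!
Since `t ^ 2 / (4 * (t + 2)) ≤ t / 4` for `t ≥ 0`, the right-hand side is at least
`3 (u + Δ) / 4 ≥ 3 (u + 2) / 4`, and `√(1 - u²) ≤ 3 (u + 2) / 4` because
`9 (u + 2)² - 16 (1 - u²) = 25 u² + 36 u + 20` has negative discriminant.
-/

lemma three_mul_div_four_le_sub_sq_div {t : ℝ} (ht : 0 ≤ t) :
    3 * t / 4 ≤ t - t ^ 2 / (4 * (t + 2)) := by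
  have hsq : t ^ 2 / (4 * (t + 2)) ≤ t / 4 := by
    rw [div_le_div_iff₀ (by positivity) (by norm_num)]
    nlinarith
  linarith

lemma sqrt_one_sub_sq_le {u : ℝ} (hu : -2 ≤ u) : √(1 - u ^ 2) ≤ 3 * (u + 2) / 4 := by
  rw [Real.sqrt_le_iff]
  constructor
  · linarith
  · nlinarith [sq_nonneg (5 * u + 18 / 5)]

/-- for every real Δ ≥ 2 and every u ∈ [−1, 1],
√(1 − u²) ≤ (u + Δ) − (u + Δ)² / (4(u + Δ + 2)). -/
theorem stmt18 (Δ u : ℝ) (hΔ : 2 ≤ Δ) (hu : u ∈ Set.Icc (-1 : ℝ) 1) :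
    Real.sqrt (1 - u ^ 2) ≤ (u + Δ) - (u + Δ) ^ 2 / (4 * (u + Δ + 2)) := by
  calc √(1 - u ^ 2) ≤ 3 * (u + 2) / 4 := sqrt_one_sub_sq_le (by linarith [hu.1])
    _ ≤ 3 * (u + Δ) / 4 := by linarith
    _ ≤ (u + Δ) - (u + Δ) ^ 2 / (4 * (u + Δ + 2)) :=
      three_mul_div_four_le_sub_sq_div (by linarith [hu.1])
end
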